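/- arXiv:2409.04972 — 2 statements merged into one kernel-verified Lean document; each statement's English description precedes it below -/
import Mathlib

section
/- Sequential composition: if mechanism R₁ satisfies (ε₁, δ₁)-differential privacy and mechanism R₂ satisfies (ε₂, δ₂)-differential privacy, then the mechanism that releases the pair (R₁(D), R₂(D)) (run independently) satisfies (ε₁ + ε₂, δ₁ + δ₂)-differential privacy. -/
open MeasureTheory

def DiffPrivate {D O : Type*} [MeasurableSpace O] (adj : D → D → Prop)
    (R : D → Measure O) (ε δ : ℝ) : Prop :=
  ∀ d d', adj d d' → ∀ s : Set O, MeasurableSet s →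
    R d s ≤ ENNReal.ofReal (Real.exp ε) * R d' s + ENNReal.ofReal δ

/-!
Conditioning on the first output, `(R₁ d ⊗ R₂ d) s = ∫ R₂ d (s_x) ∂(R₁ d)(x)`, where `s_x` is the
section of `s` at `x`. The guarantee of `R₂` bounds the integrand by `min (e^ε₂ R₂ d' (s_x)) 1 + δ₂`.
By the layer-cake formula, an `(ε, δ)` inequality between measures on sets extends to integrals
of measurable `[0, 1]`-valued functions; applied to `R₁` and the truncated integrand, it gives
the bound `e^ε₁ e^ε₂ (R₁ d' ⊗ R₂ d') s + δ₁ + δ₂`.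
-/

open Set ENNReal

namespace MeasureTheory

variable {α β : Type*} [MeasurableSpace α] [MeasurableSpace β]

theorem lintegral_eq_setLIntegral_Ioo_meas_lt (μ : Measure α) {f : α → ℝ≥0∞}
    (hf : Measurable f) (hf1 : ∀ x, f x ≤ 1) :
    ∫⁻ x, f x ∂μ = ∫⁻ t in Ioo 0 1, μ {x | t < (f x).toReal} := by
  have hf_ne_top : ∀ x, f x ≠ ∞ := fun x => ne_top_of_le_ne_top one_ne_top (hf1 x)
  have hvanish : ∀ t : ℝ, 1 ≤ t → μ {x | t < (f x).toReal} = 0 := by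
    intro t ht
    refine measure_mono_null (fun x (hx : t < (f x).toReal) => ?_) measure_empty
    exact (ht.trans_lt hx).not_ge (toReal_le_of_le_ofReal zero_le_one (by simpa using hf1 x))
  calc ∫⁻ x, f x ∂μ = ∫⁻ x, ENNReal.ofReal (f x).toReal ∂μ := by
        simp only [ofReal_toReal (hf_ne_top _)]
    _ = ∫⁻ t in Ioi 0, μ {x | t < (f x).toReal} :=
        lintegral_eq_lintegral_meas_lt μ (ae_of_all _ fun _ => toReal_nonneg)
          hf.ennreal_toReal.aemeasurable
    _ = ∫⁻ t in Ioo 0 1, μ {x | t < (f x).toReal} := by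
        rw [← Ioi_inter_Iio, inter_comm, ← Measure.restrict_restrict measurableSet_Iio]
        refine (setLIntegral_eq_of_support_subset fun t ht => ?_).symm
        by_contra h
        exact ht (hvanish t (not_lt.1 h))

theorem lintegral_le_of_forall_measure_le {μ ν : Measure α} {c δ : ℝ≥0∞}
    (h : ∀ s, MeasurableSet s → μ s ≤ c * ν s + δ) {f : α → ℝ≥0∞} (hf : Measurable f)
    (hf1 : ∀ x, f x ≤ 1) :
    ∫⁻ x, f x ∂μ ≤ c * ∫⁻ x, f x ∂ν + δ := by
  have hlevel : ∀ t : ℝ, MeasurableSet {x | t < (f x).toReal} :=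
    fun t => measurableSet_lt measurable_const hf.ennreal_toReal
  have hanti : Antitone fun t : ℝ => ν {x | t < (f x).toReal} :=
    fun _ _ hst => measure_mono fun _ hx => hst.trans_lt hx
  rw [lintegral_eq_setLIntegral_Ioo_meas_lt μ hf hf1,
    lintegral_eq_setLIntegral_Ioo_meas_lt ν hf hf1]
  calc ∫⁻ t in Ioo 0 1, μ {x | t < (f x).toReal}
      ≤ ∫⁻ t in Ioo 0 1, (c * ν {x | t < (f x).toReal} + δ) :=
        lintegral_mono fun t => h _ (hlevel t)
    _ = c * (∫⁻ t in Ioo 0 1, ν {x | t < (f x).toReal}) + δ := by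
        rw [lintegral_add_right _ measurable_const, lintegral_const_mul _ hanti.measurable,
          setLIntegral_const, Real.volume_Ioo, sub_zero, ofReal_one, mul_one]

theorem prod_apply_le_of_forall_measure_le {μ μ' : Measure α} {ν ν' : Measure β}
    [IsProbabilityMeasure μ] [IsProbabilityMeasure ν] [SFinite ν'] {a b δ₁ δ₂ : ℝ≥0∞}
    (hμ : ∀ s, MeasurableSet s → μ s ≤ a * μ' s + δ₁)
    (hν : ∀ t, MeasurableSet t → ν t ≤ b * ν' t + δ₂) {s : Set (α × β)} (hs : MeasurableSet s) :
    μ.prod ν s ≤ a * b * μ'.prod ν' s + (δ₁ + δ₂) := by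
  set g : α → ℝ≥0∞ := fun x => min (b * ν' (Prod.mk x ⁻¹' s)) 1
  have hν's : Measurable fun x => ν' (Prod.mk x ⁻¹' s) := measurable_measure_prodMk_left hs
  have hg : Measurable g := (hν's.const_mul b).min measurable_const
  -- Truncating at `1` is free because `ν` is a probability measure.
  have hsection : ∀ x, ν (Prod.mk x ⁻¹' s) ≤ g x + δ₂ := fun x =>
    calc ν (Prod.mk x ⁻¹' s)
        ≤ min (b * ν' (Prod.mk x ⁻¹' s) + δ₂) (1 + δ₂) :=
          le_min (hν _ (measurable_prodMk_left hs)) (prob_le_one.trans le_self_add)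
      _ = g x + δ₂ := min_add_add_right _ _ _
  calc μ.prod ν s = ∫⁻ x, ν (Prod.mk x ⁻¹' s) ∂μ := Measure.prod_apply hs
    _ ≤ ∫⁻ x, (g x + δ₂) ∂μ := lintegral_mono hsection
    _ = ∫⁻ x, g x ∂μ + δ₂ := by
        rw [lintegral_add_right _ measurable_const, lintegral_const, measure_univ, mul_one]
    _ ≤ a * ∫⁻ x, g x ∂μ' + δ₁ + δ₂ := by
        gcongr
        exact lintegral_le_of_forall_measure_le hμ hg fun x => min_le_right _ _
    _ ≤ a * ∫⁻ x, b * ν' (Prod.mk x ⁻¹' s) ∂μ' + δ₁ + δ₂ := by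
        gcongr with x
        exact min_le_left _ _
    _ = a * b * μ'.prod ν' s + (δ₁ + δ₂) := by
        rw [lintegral_const_mul _ hν's, ← Measure.prod_apply hs, mul_assoc, add_assoc]

end MeasureTheory

theorem dp_seq_composition_general {D O₁ O₂ : Type*} [MeasurableSpace O₁] [MeasurableSpace O₂]
    (adj : D → D → Prop) (R₁ : D → Measure O₁) (R₂ : D → Measure O₂)
    [∀ d, IsProbabilityMeasure (R₁ d)] [∀ d, IsProbabilityMeasure (R₂ d)]
    {ε₁ δ₁ ε₂ δ₂ : ℝ} (hδ₁ : 0 ≤ δ₁) (hδ₂ : 0 ≤ δ₂)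
    (h₁ : DiffPrivate adj R₁ ε₁ δ₁) (h₂ : DiffPrivate adj R₂ ε₂ δ₂) :
    DiffPrivate adj (fun d => (R₁ d).prod (R₂ d)) (ε₁ + ε₂) (δ₁ + δ₂) := by
  intro d d' hadj s hs
  calc (R₁ d).prod (R₂ d) s
      ≤ ENNReal.ofReal (Real.exp ε₁) * ENNReal.ofReal (Real.exp ε₂) * (R₁ d').prod (R₂ d') s
          + (ENNReal.ofReal δ₁ + ENNReal.ofReal δ₂) :=
        prod_apply_le_of_forall_measure_le (h₁ d d' hadj) (h₂ d d' hadj) hs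
    _ = ENNReal.ofReal (Real.exp (ε₁ + ε₂)) * (R₁ d').prod (R₂ d') s
          + ENNReal.ofReal (δ₁ + δ₂) := by
        rw [Real.exp_add, ENNReal.ofReal_mul (Real.exp_nonneg _), ENNReal.ofReal_add hδ₁ hδ₂]

/-- Sequential composition: if `R₁` is `(ε₁, δ₁)`-DP and `R₂` is `(ε₂, δ₂)`-DP,
then the mechanism releasing the independent pair `(R₁(D), R₂(D))` is
`(ε₁ + ε₂, δ₁ + δ₂)`-DP. -/
theorem dp_seq_composition {D O₁ O₂ : Type*} [MeasurableSpace O₁] [MeasurableSpace O₂]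
    (adj : D → D → Prop) (R₁ : D → Measure O₁) (R₂ : D → Measure O₂)
    [∀ d, IsProbabilityMeasure (R₁ d)] [∀ d, IsProbabilityMeasure (R₂ d)]
    {ε₁ δ₁ ε₂ δ₂ : ℝ} (hε₁ : 0 ≤ ε₁) (hδ₁ : 0 ≤ δ₁) (hε₂ : 0 ≤ ε₂) (hδ₂ : 0 ≤ δ₂)
    (h₁ : DiffPrivate adj R₁ ε₁ δ₁) (h₂ : DiffPrivate adj R₂ ε₂ δ₂) :
    DiffPrivate adj (fun d => (R₁ d).prod (R₂ d)) (ε₁ + ε₂) (δ₁ + δ₂) :=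
  dp_seq_composition_general adj R₁ R₂ hδ₁ hδ₂ h₁ h₂
end

section
/- The Gaussian mechanism satisfies (ε, δ)-differential privacy: if t : D → ℝ has sensitivity Δt and 0 < ε ≤ 1, 0 < δ < 1, then M(D) = t(D) + N(0, c²) with standard deviation c = Δt·√(2 ln(1.25/δ))/ε satisfies (ε, δ)-differential privacy. -/
open MeasureTheory ProbabilityTheory

/-!
The density of `N(μ, σ²)` is at most `e^ε` times that of `N(μ', σ²)` outside the set `B` where
`(x - μ')² - (x - μ)² > 2σ²ε`, so `M(d) s ≤ e^ε M(d') s + M(d) B`. When `|μ - μ'| ≤ Δt`, the set `B`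
is contained in a half-line whose standardized endpoint is `τ = S - ε / (2S)`, with
`S = √(2 ln(1.25/δ))`. If `τ ≥ 0`, the tail bound `P(Z > τ) ≤ e^{-τ²/2} / 2` and `τ² ≥ S² - 1` give
`P(Z > τ) ≤ √e · δ / 2.5 ≤ δ`. If `τ < 0`, then `ln(1.25/δ) < 1/4`, so `δ > 0.93`, while
`P(Z > τ) ≤ 1/2 + |τ| / √(2π) < 0.83`.
-/

open Real Set
open scoped NNReal ENNReal

namespace ProbabilityTheory

lemma gaussianPDFReal_le_exp_mul_gaussianPDFReal (μ μ' : ℝ) (v : ℝ≥0) {ε x : ℝ}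
    (h : (x - μ') ^ 2 - (x - μ) ^ 2 ≤ 2 * v * ε) :
    gaussianPDFReal μ v x ≤ exp ε * gaussianPDFReal μ' v x := by
  rcases eq_zero_or_pos v with rfl | hv
  · simp
  have hexp : -(x - μ) ^ 2 / (2 * v) ≤ ε + -(x - μ') ^ 2 / (2 * v) := by
    rw [← sub_nonneg]
    have : ε + -(x - μ') ^ 2 / (2 * v) - -(x - μ) ^ 2 / (2 * v)
        = (2 * v * ε - ((x - μ') ^ 2 - (x - μ) ^ 2)) / (2 * v) := by
      field_simp; ring
    rw [this]
    exact div_nonneg (by linarith) (by positivity)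
  rw [gaussianPDFReal, gaussianPDFReal, mul_left_comm, ← exp_add]
  gcongr

lemma gaussianPDFReal_le_inv_sqrt (μ : ℝ) (v : ℝ≥0) (x : ℝ) :
    gaussianPDFReal μ v x ≤ (√(2 * π * v))⁻¹ := by
  rw [gaussianPDFReal]
  refine mul_le_of_le_one_right (by positivity) (exp_le_one_iff.mpr ?_)
  exact div_nonpos_of_nonpos_of_nonneg (by nlinarith [sq_nonneg (x - μ)]) (by positivity)

variable {μ : ℝ} {v : ℝ≥0}

lemma gaussianReal_le_exp_mul (μ' : ℝ) (hv : v ≠ 0) {ε : ℝ} {s : Set ℝ}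
    (h : ∀ x ∈ s, (x - μ') ^ 2 - (x - μ) ^ 2 ≤ 2 * v * ε) :
    gaussianReal μ v s ≤ ENNReal.ofReal (exp ε) * gaussianReal μ' v s := by
  rw [gaussianReal_apply _ hv, gaussianReal_apply _ hv,
    ← lintegral_const_mul _ (measurable_gaussianPDF _ _)]
  refine setLIntegral_mono ((measurable_gaussianPDF _ _).const_mul _) fun x hx ↦ ?_
  rw [gaussianPDF, gaussianPDF, ← ENNReal.ofReal_mul (exp_nonneg _)]
  exact ENNReal.ofReal_le_ofReal (gaussianPDFReal_le_exp_mul_gaussianPDFReal μ μ' v (h x hx))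

lemma gaussianReal_le_exp_mul_add (μ' : ℝ) (hv : v ≠ 0) (ε : ℝ) (s : Set ℝ) :
    gaussianReal μ v s ≤ ENNReal.ofReal (exp ε) * gaussianReal μ' v s
      + gaussianReal μ v {x | 2 * v * ε < (x - μ') ^ 2 - (x - μ) ^ 2} := by
  set B := {x | 2 * v * ε < (x - μ') ^ 2 - (x - μ) ^ 2}
  calc gaussianReal μ v s ≤ gaussianReal μ v (s \ B ∪ B) := measure_mono (by simp)
    _ ≤ gaussianReal μ v (s \ B) + gaussianReal μ v B := measure_union_le _ _
    _ ≤ ENNReal.ofReal (exp ε) * gaussianReal μ' v s + gaussianReal μ v B := by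
      gcongr
      calc gaussianReal μ v (s \ B)
          ≤ ENNReal.ofReal (exp ε) * gaussianReal μ' v (s \ B) :=
            gaussianReal_le_exp_mul μ' hv fun x hx ↦ not_lt.mp hx.2
        _ ≤ ENNReal.ofReal (exp ε) * gaussianReal μ' v s := by gcongr; exact sdiff_subset

lemma gaussianReal_le_mul_volume (hv : v ≠ 0) (s : Set ℝ) :
    gaussianReal μ v s ≤ ENNReal.ofReal (√(2 * π * v))⁻¹ * volume s := by
  rw [gaussianReal_apply _ hv, ← setLIntegral_const]
  exact setLIntegral_mono measurable_const fun x _ ↦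
    ENNReal.ofReal_le_ofReal (gaussianPDFReal_le_inv_sqrt μ v x)

lemma gaussianReal_preimage_neg (s : Set ℝ) :
    gaussianReal μ v (Neg.neg ⁻¹' s) = gaussianReal (-μ) v s := by
  rw [← gaussianReal_map_neg]
  exact ((MeasurableEquiv.neg ℝ).map_apply s).symm

lemma gaussianReal_zero_Ioi_zero (hv : v ≠ 0) : gaussianReal 0 v (Ioi 0) = 2⁻¹ := by
  have := nullSingletonClass_gaussianReal (μ := 0) hv
  have hIic : gaussianReal 0 v (Iic 0) = gaussianReal 0 v (Ioi 0) := by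
    rw [measure_congr Iio_ae_eq_Iic.symm, ← neg_zero, ← gaussianReal_preimage_neg]
    simp
  have hsum : gaussianReal 0 v (Iic 0) + gaussianReal 0 v (Ioi 0) = 1 := by
    rw [← measure_union (Iic_disjoint_Ioi le_rfl) measurableSet_Ioi, Iic_union_Ioi, measure_univ]
  rw [hIic, ← two_mul] at hsum
  exact ENNReal.eq_inv_of_mul_eq_one_left (by rwa [mul_comm])

lemma gaussianReal_Ioi_add (hv : v ≠ 0) (t : ℝ) :
    gaussianReal μ v (Ioi (μ + t)) = gaussianReal 0 1 (Ioi (t / √v)) := by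
  have hσ : 0 < √(v : ℝ) := sqrt_pos.mpr (by positivity)
  have hstd : ((gaussianReal μ v).map (· - μ)).map (· / √v) = gaussianReal 0 1 := by
    rw [gaussianReal_map_sub_const, gaussianReal_map_div_const, sub_self, zero_div]
    congr
    ext
    simp [sq_sqrt, hv]
  rw [← hstd, Measure.map_apply (by fun_prop) measurableSet_Ioi,
    Measure.map_apply (by fun_prop) (measurableSet_Ioi.preimage (by fun_prop))]
  congr 1
  ext x
  simp only [mem_preimage, mem_Ioi, div_lt_div_iff_of_pos_right hσ]
  constructor <;> intro <;> linarith

lemma gaussianReal_Ioi_le_exp {t : ℝ} (ht : 0 ≤ t) :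
    gaussianReal 0 1 (Ioi t) ≤ ENNReal.ofReal (exp (-t ^ 2 / 2) / 2) := by
  have hshift := gaussianReal_Ioi_add (μ := -t) one_ne_zero t
  rw [neg_add_cancel, NNReal.coe_one, sqrt_one, div_one] at hshift
  rw [← hshift]
  calc gaussianReal (-t) 1 (Ioi 0)
      ≤ ENNReal.ofReal (exp (-t ^ 2 / 2)) * gaussianReal 0 1 (Ioi 0) :=
        gaussianReal_le_exp_mul 0 one_ne_zero fun x hx ↦ by
          push_cast
          nlinarith [mul_nonneg (le_of_lt (mem_Ioi.mp hx)) ht]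
    _ = ENNReal.ofReal (exp (-t ^ 2 / 2) / 2) := by
      rw [gaussianReal_zero_Ioi_zero one_ne_zero, ENNReal.ofReal_div_of_pos two_pos,
        ENNReal.ofReal_ofNat, ← div_eq_mul_inv]

end ProbabilityTheory

section
variable {ε L : ℝ}

lemma gaussianReal_Ioi_sqrt_sub_le_of_nonneg (hε : ε ≤ 1) (hL : 0 < L)
    (hτ : 0 ≤ √(2 * L) - ε / (2 * √(2 * L))) :
    gaussianReal 0 1 (Ioi (√(2 * L) - ε / (2 * √(2 * L)))) ≤ ENNReal.ofReal (1.25 * exp (-L)) := by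
  set S := √(2 * L)
  have hS : 0 < S := sqrt_pos.mpr (by linarith)
  have hS2 : S ^ 2 = 2 * L := sq_sqrt (by linarith)
  have hτ2 : 2 * L - 1 ≤ (S - ε / (2 * S)) ^ 2 := by
    have : S * (ε / (2 * S)) = ε / 2 := by field_simp
    nlinarith [sq_nonneg (ε / (2 * S))]
  have hexp_half : exp (1 / 2) ≤ 2.5 := by
    nlinarith [exp_one_lt_d9, exp_pos (1 / 2 : ℝ), exp_add (1 / 2 : ℝ) (1 / 2)]
  refine (gaussianReal_Ioi_le_exp hτ).trans (ENNReal.ofReal_le_ofReal ?_)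
  calc exp (-(S - ε / (2 * S)) ^ 2 / 2) / 2 ≤ exp (1 / 2) * exp (-L) / 2 := by
        rw [← exp_add]; gcongr; linarith
    _ ≤ 1.25 * exp (-L) := by nlinarith [exp_pos (-L)]

lemma gaussianReal_Ioi_sqrt_sub_le_of_neg (hε : ε ≤ 1) (hL : 1 / 5 ≤ L)
    (hτ : √(2 * L) - ε / (2 * √(2 * L)) < 0) :
    gaussianReal 0 1 (Ioi (√(2 * L) - ε / (2 * √(2 * L)))) ≤ ENNReal.ofReal (1.25 * exp (-L)) := by
  set S := √(2 * L)
  set τ := S - ε / (2 * S)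
  have hS : 0 < S := sqrt_pos.mpr (by linarith)
  have hS2 : S ^ 2 = 2 * L := sq_sqrt (by linarith)
  have hL4 : L < 1 / 4 := by
    have : S * S < ε / (2 * S) * S := by gcongr; linarith
    rw [div_mul_eq_mul_div, mul_div_mul_right _ _ hS.ne'] at this
    nlinarith
  have hτ_ge : -0.8 ≤ τ := by
    have h2S : 1.25 ≤ 2 * S := by nlinarith
    have : ε / (2 * S) ≤ 0.8 := by
      rw [div_le_iff₀ (by linarith)]; nlinarith
    linarith
  have hC : (√(2 * π))⁻¹ ≤ 0.4 := by
    rw [inv_le_comm₀ (by positivity) (by norm_num), le_sqrt (by norm_num) (by positivity)]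
    nlinarith [pi_gt_d2]
  have hexp : 0.75 ≤ exp (-L) := by linarith [add_one_le_exp (-L)]
  have hsplit : Ioi τ ⊆ Ioc τ 0 ∪ Ioi 0 := by
    intro x hx
    rcases le_or_gt x 0 with h | h
    · exact Or.inl ⟨hx, h⟩
    · exact Or.inr h
  calc gaussianReal 0 1 (Ioi τ) ≤ gaussianReal 0 1 (Ioc τ 0) + gaussianReal 0 1 (Ioi 0) :=
        (measure_mono hsplit).trans (measure_union_le _ _)
    _ ≤ ENNReal.ofReal (√(2 * π))⁻¹ * ENNReal.ofReal (-τ) + ENNReal.ofReal (1 / 2) := by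
        gcongr
        · simpa using gaussianReal_le_mul_volume (μ := 0) one_ne_zero (Ioc τ 0)
        · rw [gaussianReal_zero_Ioi_zero one_ne_zero, one_div, ENNReal.ofReal_inv_of_pos two_pos,
            ENNReal.ofReal_ofNat]
    _ = ENNReal.ofReal ((√(2 * π))⁻¹ * -τ + 1 / 2) := by
        rw [← ENNReal.ofReal_mul (by positivity),
          ← ENNReal.ofReal_add (mul_nonneg (by positivity) (by linarith)) (by norm_num)]
    _ ≤ ENNReal.ofReal (1.25 * exp (-L)) := by
        gcongr
        nlinarith

lemma gaussianReal_Ioi_sqrt_sub_le (hε : ε ≤ 1) (hL : 1 / 5 ≤ L) :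
    gaussianReal 0 1 (Ioi (√(2 * L) - ε / (2 * √(2 * L)))) ≤ ENNReal.ofReal (1.25 * exp (-L)) := by
  rcases le_or_gt 0 (√(2 * L) - ε / (2 * √(2 * L))) with hτ | hτ
  · exact gaussianReal_Ioi_sqrt_sub_le_of_nonneg hε (by linarith) hτ
  · exact gaussianReal_Ioi_sqrt_sub_le_of_neg hε hL hτ

end

lemma setOf_lt_sq_sub_sq_subset_Ioi {μ μ' w Δ : ℝ} (hw : 0 ≤ w) (hμ : μ' ≤ μ) (hΔ : μ - μ' ≤ Δ) :
    {x : ℝ | w < (x - μ') ^ 2 - (x - μ) ^ 2} ⊆ Ioi (μ + (w / (2 * Δ) - Δ / 2)) := by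
  intro x hx
  have hx' : w < (μ - μ') * (2 * (x - μ) + (μ - μ')) := by
    simp only [mem_ofPred_eq] at hx; linarith
  rcases hμ.eq_or_lt with h | h
  · rw [h, sub_self, zero_mul] at hx'; linarith
  have ha : 0 < μ - μ' := sub_pos.mpr h
  have hw' : w / (2 * Δ) ≤ w / (2 * (μ - μ')) := by gcongr
  have : w / (2 * (μ - μ')) < x - μ + (μ - μ') / 2 := by
    rw [div_lt_iff₀ (by positivity)]; linarith
  rw [mem_Ioi]
  linarith

lemma gaussianReal_setOf_lt_sq_sub_sq_le {μ μ' w Δ : ℝ} {v : ℝ≥0} (hv : v ≠ 0) (hw : 0 ≤ w)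
    (hΔ : |μ - μ'| ≤ Δ) :
    gaussianReal μ v {x | w < (x - μ') ^ 2 - (x - μ) ^ 2}
      ≤ gaussianReal 0 1 (Ioi ((w / (2 * Δ) - Δ / 2) / √v)) := by
  wlog hμ : μ' ≤ μ generalizing μ μ'
  · have := this (μ := -μ) (μ' := -μ') (by rwa [neg_sub_neg, abs_sub_comm]) (by linarith)
    rw [← gaussianReal_preimage_neg] at this
    convert this using 2
    ext x
    simp only [mem_preimage, mem_ofPred_eq]
    ring_nf
  rw [← gaussianReal_Ioi_add hv]
  exact measure_mono (setOf_lt_sq_sub_sq_subset_Ioi hw hμ (le_of_abs_le hΔ))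

/-- The Gaussian mechanism `M(D) = t(D) + N(0, c²)` with
`c = Δt·√(2 ln(1.25/δ))/ε` is `(ε, δ)`-differentially private for
`0 < ε ≤ 1` and `0 < δ < 1`, when `t` has sensitivity `Δt`. -/
theorem gaussian_mechanism_dp {D : Type*} (adj : D → D → Prop) (t : D → ℝ)
    {Δt ε δ : ℝ} (hΔt : 0 < Δt) (hε0 : 0 < ε) (hε1 : ε ≤ 1)
    (hδ0 : 0 < δ) (hδ1 : δ < 1)
    (hsens : ∀ d d', adj d d' → |t d - t d'| ≤ Δt) :
    DiffPrivate adj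
      (fun d => gaussianReal (t d)
        (Real.toNNReal ((Δt * Real.sqrt (2 * Real.log (1.25 / δ)) / ε) ^ 2)))
      ε δ := by
  intro d d' hadj s _
  have hL : 1 / 5 ≤ log (1.25 / δ) := by
    have := one_sub_inv_le_log_of_pos (x := 1.25 / δ) (by positivity)
    rw [inv_div] at this
    linarith [div_le_div_of_nonneg_right hδ1.le (by norm_num : (0 : ℝ) ≤ 1.25)]
  set L := log (1.25 / δ)
  have hδL : 1.25 * exp (-L) = δ := by
    rw [exp_neg, exp_log (by positivity), inv_div]; field_simp
  set S := √(2 * L)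
  have hS : 0 < S := sqrt_pos.mpr (by linarith)
  set σ := Δt * S / ε
  set v := (σ ^ 2).toNNReal
  have hσ : 0 < σ := by positivity
  have hv : (v : ℝ) = σ ^ 2 := coe_toNNReal _ (sq_nonneg σ)
  have hv0 : v ≠ 0 := by rw [← NNReal.coe_ne_zero, hv]; positivity
  have hτ : (2 * v * ε / (2 * Δt) - Δt / 2) / √v = S - ε / (2 * S) := by
    rw [hv, sqrt_sq hσ.le]; simp only [σ]; field_simp
  calc gaussianReal (t d) v s
      ≤ ENNReal.ofReal (exp ε) * gaussianReal (t d') v s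
        + gaussianReal (t d) v {x | 2 * v * ε < (x - t d') ^ 2 - (x - t d) ^ 2} :=
        gaussianReal_le_exp_mul_add _ hv0 ε s
    _ ≤ ENNReal.ofReal (exp ε) * gaussianReal (t d') v s + ENNReal.ofReal δ := by
      gcongr
      calc _ ≤ gaussianReal 0 1 (Ioi (S - ε / (2 * S))) :=
            hτ ▸ gaussianReal_setOf_lt_sq_sub_sq_le hv0 (by positivity) (hsens d d' hadj)
        _ ≤ ENNReal.ofReal δ := hδL ▸ gaussianReal_Ioi_sqrt_sub_le hε1 hL
end
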